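/- arXiv:2106.04508 — 4 statements merged into one kernel-verified Lean document; each statement's English description precedes it below -/
import Mathlib

section
/- Consider minimizing P(π) = Σ_i α s_i^{γ−1} e_i / p_i + α s_min^γ (1 − Σ_i e_i/(p_i s_i)) subject to Σ_i e_i/(p_i s_i) ≤ 1, s_min ≤ s_i ≤ 1, p_i > 0, Σ_{i∈δ} 2p_i ≤ d for all paths δ. If π is feasible with total utilization U(π) < 1 and some s_k > s_min, then there exists another feasible configuration π' with strictly smaller objective value (so any optimum with some s_i > s_min has U = 1). -/
/-- If a feasible configuration of the single-mode power-minimization problem has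
total utilization strictly below 1 and some task's speed strictly above `s_min`,
then there is another feasible configuration with strictly smaller objective value
(so any optimum with some `s_i > s_min` has utilization exactly 1). -/
theorem stmt_11 {n : ℕ} (e : Fin n → ℝ) (smin γ α d : ℝ)
    (Paths : Set (List (Fin n)))
    (he : ∀ i, 0 < e i) (hsmin : 0 < smin) (hsmin1 : smin < 1)
    (hγ : 2 ≤ γ) (hα : 0 < α)
    (p s : Fin n → ℝ)
    (hp : ∀ i, 0 < p i)
    (hs : ∀ i, smin ≤ s i ∧ s i ≤ 1)
    (hU : ∑ i, e i / (p i * s i) ≤ 1)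
    (hD : ∀ δ ∈ Paths, (δ.map (fun i => 2 * p i)).sum ≤ d)
    (hUlt : ∑ i, e i / (p i * s i) < 1)
    (hk : ∃ k, smin < s k) :
    ∃ p' s' : Fin n → ℝ,
      (∀ i, 0 < p' i) ∧
      (∀ i, smin ≤ s' i ∧ s' i ≤ 1) ∧
      (∑ i, e i / (p' i * s' i) ≤ 1) ∧
      (∀ δ ∈ Paths, (δ.map (fun i => 2 * p' i)).sum ≤ d) ∧
      (∑ i, α * s' i ^ (γ - 1) * e i / p' i
          + α * smin ^ γ * (1 - ∑ i, e i / (p' i * s' i))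
        < ∑ i, α * s i ^ (γ - 1) * e i / p i
          + α * smin ^ γ * (1 - ∑ i, e i / (p i * s i))) := by
  obtain ⟨k, hks⟩ := hk
  have hsk0 : 0 < s k := lt_trans hsmin hks
  have hek := he k
  have hpk := hp k
  set U : ℝ := ∑ i, e i / (p i * s i) with hUdef
  set ε : ℝ := 1 - U with hε
  have hε0 : 0 < ε := by simp [hε]; linarith
  set t0 : ℝ := (1 / s k + ε * p k / e k)⁻¹ with ht0def
  have hc0 : 0 < ε * p k / e k := by positivity
  have hinvpos : 0 < 1 / s k + ε * p k / e k := by positivity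
  have ht00 : 0 < t0 := by positivity
  have ht0lt : t0 < s k := by
    rw [ht0def, one_div]
    have h1 : (s k)⁻¹ < (s k)⁻¹ + ε * p k / e k := by
      have : 0 < ε * p k / e k := by positivity
      linarith
    have h2 := inv_strictAnti₀ (by positivity : (0:ℝ) < (s k)⁻¹) h1
    simpa using h2
  set t : ℝ := max smin t0 with htdef
  have htlt : t < s k := max_lt hks ht0lt
  have htsmin : smin ≤ t := le_max_left _ _
  have ht0 : 0 < t := lt_of_lt_of_le hsmin htsmin
  have ht1 : t ≤ 1 := le_trans (le_of_lt htlt) (hs k).2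
  have ht0le : t0 ≤ t := le_max_right _ _
  -- key utilization bound
  have hkey : e k / (p k * t) ≤ e k / (p k * s k) + ε := by
    have h1 : e k / (p k * t) ≤ e k / (p k * t0) :=
      div_le_div_of_nonneg_left (le_of_lt hek) (by positivity)
        (by exact mul_le_mul_of_nonneg_left ht0le (le_of_lt hpk))
    have h2 : e k / (p k * t0) = e k / (p k * s k) + ε := by
      rw [ht0def]
      field_simp
    linarith
  refine ⟨p, Function.update s k t, hp, ?_, ?_, hD, ?_⟩
  · intro i
    by_cases h : i = k
    · subst h; simp [htsmin, ht1]
    · simp [Function.update_of_ne h, hs i]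
  · -- utilization ≤ 1
    have hfun : (fun i => e i / (p i * Function.update s k t i))
        = Function.update (fun i => e i / (p i * s i)) k (e k / (p k * t)) := by
      funext i
      by_cases h : i = k
      · subst h; simp
      · simp [Function.update_of_ne h]
    rw [hfun, Finset.sum_update_of_mem (Finset.mem_univ k)]
    have hsplit := Finset.sum_eq_sum_sdiff_singleton_add (Finset.mem_univ k)
      (fun i => e i / (p i * s i))
    have hU' : ∑ x ∈ Finset.univ \ {k}, e x / (p x * s x)
        = U - e k / (p k * s k) := by
      rw [hUdef, hsplit]; ring
    rw [hU']
    linarith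
  · -- objective strictly decreases
    have hfun1 : (fun i => e i / (p i * Function.update s k t i))
        = Function.update (fun i => e i / (p i * s i)) k (e k / (p k * t)) := by
      funext i
      by_cases h : i = k
      · subst h; simp
      · simp [Function.update_of_ne h]
    have hfun2 : (fun i => α * Function.update s k t i ^ (γ - 1) * e i / p i)
        = Function.update (fun i => α * s i ^ (γ - 1) * e i / p i) k
            (α * t ^ (γ - 1) * e k / p k) := by
      funext i
      by_cases h : i = k
      · subst h; simp
      · simp [Function.update_of_ne h]
    rw [show (∑ i, α * Function.update s k t i ^ (γ - 1) * e i / p i) =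
        ∑ i, (fun i => α * Function.update s k t i ^ (γ - 1) * e i / p i) i from rfl,
      hfun2, Finset.sum_update_of_mem (Finset.mem_univ k),
      show (∑ i, e i / (p i * Function.update s k t i)) =
        ∑ i, (fun i => e i / (p i * Function.update s k t i)) i from rfl,
      hfun1, Finset.sum_update_of_mem (Finset.mem_univ k)]
    have hsplit1 := Finset.sum_eq_sum_sdiff_singleton_add (Finset.mem_univ k)
      (fun i => e i / (p i * s i))
    have hsplit2 := Finset.sum_eq_sum_sdiff_singleton_add (Finset.mem_univ k)
      (fun i => α * s i ^ (γ - 1) * e i / p i)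
    -- remaining: strict inequality in the k-th term
    have hpow : t ^ (γ - 1) < s k ^ (γ - 1) :=
      Real.rpow_lt_rpow (le_of_lt ht0) htlt (by linarith)
    have hdiv : e k / (p k * s k) < e k / (p k * t) := by
      apply div_lt_div_of_pos_left hek (by positivity)
      exact mul_lt_mul_of_pos_left htlt hpk
    have hsm : 0 < smin ^ γ := Real.rpow_pos_of_pos hsmin γ
    have h1 : α * t ^ (γ - 1) * e k / p k < α * s k ^ (γ - 1) * e k / p k := by
      apply div_lt_div_of_pos_right _ hpk
      have := mul_lt_mul_of_pos_left hpow hα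
      nlinarith
    nlinarith [mul_lt_mul_of_pos_left hdiv (mul_pos hα hsm), hsplit1, hsplit2, hε, h1]
end

section
/- For γ ≥ 2, e > 0, p > 0, and 0 < s_min ≤ s, the function f(s) = s^{γ−1}·e/p + s_min^γ·(−e/(p·s)) is strictly increasing in s on [s_min, ∞); in particular decreasing a task's speed factor (while schedulability permits) strictly decreases the total average power P(π). -/
/-- For `γ ≥ 2`, `e > 0`, `p > 0` and `0 < s_min`, the function
`f(s) = s^(γ-1)·e/p + s_min^γ·(−e/(p·s))` is strictly increasing on `[s_min, ∞)`;
so decreasing a task's speed factor strictly decreases the total average power. -/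
theorem stmt_12 (e p smin γ : ℝ) (he : 0 < e) (hp : 0 < p)
    (hsmin : 0 < smin) (hγ : 2 ≤ γ) :
    StrictMonoOn (fun s : ℝ => s ^ (γ - 1) * e / p + smin ^ γ * (-(e / (p * s))))
      (Set.Ici smin) := by
  intro a ha b hb hab
  simp only [Set.mem_Ici] at ha hb
  have ha0 : 0 < a := lt_of_lt_of_le hsmin ha
  have hb0 : 0 < b := ha0.trans hab
  have h1 : a ^ (γ - 1) * e / p < b ^ (γ - 1) * e / p := by
    have : a ^ (γ - 1) < b ^ (γ - 1) :=
      Real.rpow_lt_rpow ha0.le hab (by linarith)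
    have he' : 0 < e / p := div_pos he hp
    calc a ^ (γ - 1) * e / p = a ^ (γ - 1) * (e / p) := by ring
    _ < b ^ (γ - 1) * (e / p) := by exact mul_lt_mul_of_pos_right this he'
    _ = b ^ (γ - 1) * e / p := by ring
  have h2 : smin ^ γ * (-(e / (p * a))) < smin ^ γ * (-(e / (p * b))) := by
    have hs : (0:ℝ) < smin ^ γ := Real.rpow_pos_of_pos hsmin γ
    have : e / (p * b) < e / (p * a) := by
      apply div_lt_div_of_pos_left he (by positivity)
      exact mul_lt_mul_of_pos_left hab hp
    have := neg_lt_neg this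
    exact mul_lt_mul_of_pos_left this hs
  exact add_lt_add h1 h2
end

section
/- Let D be the output of the AEAP delay algorithm on path δ with p_i^old ≥ p_i^new for all i. Then D ≤ max_{1≤k≤|δ|} ( p_{δ(k)}^old + p_{δ(k)}^new + Σ_{j>k} 2·p_{δ(j)}^new ). -/
/-- One step of Algorithm 1 (AEAP worst-case delay). -/
noncomputable def aeapStep {ι : Type*} (pold pnew : ι → ℝ) (D : ℝ) (i : ι) : ℝ :=
  if D > pold i - pnew i then D + 2 * pnew i else pold i + pnew i

/-- The delay computed by Algorithm 1 on the nonempty path `hd :: tl`. -/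
noncomputable def aeapDelay {ι : Type*} (pold pnew : ι → ℝ) (hd : ι) (tl : List ι) : ℝ :=
  tl.foldl (aeapStep pold pnew) (pold hd + pnew hd)

/-- Max over all "reset choices" along the list. -/
noncomputable def aeapBnd {ι : Type*} (pold pnew : ι → ℝ) : ℝ → List ι → ℝ
  | D, [] => D
  | D, a :: l => max (aeapBnd pold pnew (D + 2 * pnew a) l)
      (aeapBnd pold pnew (pold a + pnew a) l)

lemma foldl_le_bnd {ι : Type*} (pold pnew : ι → ℝ) :
    ∀ (l : List ι) (D : ℝ),
      l.foldl (aeapStep pold pnew) D ≤ aeapBnd pold pnew D l := by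
  intro l
  induction l with
  | nil => intro D; simp [aeapBnd]
  | cons a l ih =>
    intro D
    simp only [List.foldl_cons, aeapBnd]
    by_cases hc : D > pold a - pnew a
    · rw [show aeapStep pold pnew D a = D + 2 * pnew a by simp [aeapStep, hc]]
      exact le_trans (ih _) (le_max_left _ _)
    · rw [show aeapStep pold pnew D a = pold a + pnew a by simp [aeapStep, hc]]
      exact le_trans (ih _) (le_max_right _ _)

lemma bnd_le {ι : Type*} (pold pnew : ι → ℝ) :
    ∀ (l : List ι) (D R : ℝ),
      D + (l.map (fun i => 2 * pnew i)).sum ≤ R →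
      (∀ k (hk : k < l.length),
        pold (l.get ⟨k, hk⟩) + pnew (l.get ⟨k, hk⟩) +
          ((l.drop (k + 1)).map (fun i => 2 * pnew i)).sum ≤ R) →
      aeapBnd pold pnew D l ≤ R := by
  intro l
  induction l with
  | nil => intro D R h1 _; simpa [aeapBnd] using h1
  | cons a l ih =>
    intro D R h1 h2
    simp only [aeapBnd]
    apply max_le
    · apply ih
      · calc D + 2 * pnew a + (l.map (fun i => 2 * pnew i)).sum
            = D + ((a :: l).map (fun i => 2 * pnew i)).sum := by
              simp [add_assoc]
          _ ≤ R := h1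
      · intro k hk
        have := h2 (k + 1) (by simpa using Nat.succ_lt_succ hk)
        simpa using this
    · apply ih
      · have := h2 0 (by simp)
        simpa using this
      · intro k hk
        have := h2 (k + 1) (by simpa using Nat.succ_lt_succ hk)
        simpa using this

/-- The AEAP delay is dominated by the worst `reset` point plus subsequent
new-mode contributions:
`D ≤ max_k (p_old(δ k) + p_new(δ k) + Σ_{j>k} 2·p_new(δ j))`. -/
theorem stmt_15 {ι : Type*} (pold pnew : ι → ℝ)
    (hpos : ∀ i, 0 < pnew i) (hge : ∀ i, pnew i ≤ pold i)
    (hd : ι) (tl : List ι) :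
    aeapDelay pold pnew hd tl ≤
      Finset.univ.sup' ⟨⟨0, by simp⟩, Finset.mem_univ _⟩
        (fun k : Fin (hd :: tl).length =>
          pold ((hd :: tl).get k) + pnew ((hd :: tl).get k) +
            (((hd :: tl).drop (k + 1)).map (fun i => 2 * pnew i)).sum) := by
  have h1 := foldl_le_bnd pold pnew tl (pold hd + pnew hd)
  refine le_trans h1 (bnd_le pold pnew tl _ _ ?_ ?_)
  · have := Finset.le_sup' (f := fun k : Fin (hd :: tl).length =>
        pold ((hd :: tl).get k) + pnew ((hd :: tl).get k) +
          (((hd :: tl).drop (k + 1)).map (fun i => 2 * pnew i)).sum)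
        (Finset.mem_univ (⟨0, by simp⟩ : Fin (hd :: tl).length))
    simpa using this
  · intro k hk
    have := Finset.le_sup' (f := fun k : Fin (hd :: tl).length =>
        pold ((hd :: tl).get k) + pnew ((hd :: tl).get k) +
          (((hd :: tl).drop (k + 1)).map (fun i => 2 * pnew i)).sum)
        (Finset.mem_univ (⟨k + 1, by simpa using Nat.succ_lt_succ hk⟩ :
          Fin (hd :: tl).length))
    simpa using this
end

section
/- If p_i^old ≥ p_i^new for all tasks i, the AEAP algorithm output D on path δ exceeds the new-mode path delay Σ_{i∈δ} 2p_i^new by at most max_i (p_i^old − p_i^new); i.e., D ≤ Σ_{i∈δ} 2p_i^new + max_{i∈δ}(p_i^old − p_i^new). -/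
lemma aeap_fold_le {ι : Type*} (pold pnew : ι → ℝ)
    (hpos : ∀ i, 0 < pnew i) (M : ℝ) :
    ∀ (l : List ι) (D : ℝ), (∀ i ∈ l, pold i - pnew i ≤ M) →
      l.foldl (aeapStep pold pnew) D ≤ max D M + (l.map (fun i => 2 * pnew i)).sum := by
  intro l
  induction l with
  | nil => intro D _; simp [le_max_left]
  | cons i l ih =>
    intro D hM
    have hstep : aeapStep pold pnew D i ≤ max D M + 2 * pnew i := by
      unfold aeapStep
      split
      · have := le_max_left D M; linarith
      · have h1 : D ≤ pold i - pnew i := by linarith [not_lt.mp ‹¬ D > pold i - pnew i›]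
        have h2 : pold i - pnew i ≤ M := hM i (by simp)
        have := le_max_right D M
        linarith
    have h2 : l.foldl (aeapStep pold pnew) (aeapStep pold pnew D i) ≤
        max (aeapStep pold pnew D i) M + (l.map (fun i => 2 * pnew i)).sum :=
      ih _ (fun j hj => hM j (by simp [hj]))
    have hmax : max (aeapStep pold pnew D i) M ≤ max D M + 2 * pnew i := by
      have := hpos i
      have := le_max_right D M
      exact max_le hstep (by linarith)
    simp only [List.foldl_cons, List.map_cons, List.sum_cons]
    calc (l.foldl (aeapStep pold pnew) (aeapStep pold pnew D i))
        ≤ max (aeapStep pold pnew D i) M + (l.map (fun i => 2 * pnew i)).sum := h2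
      _ ≤ (max D M + 2 * pnew i) + (l.map (fun i => 2 * pnew i)).sum := by linarith
      _ = max D M + (2 * pnew i + (l.map (fun i => 2 * pnew i)).sum) := by ring

/-- The AEAP delay exceeds the steady-state new-mode path delay `Σ 2·p_new` by at
most `max_i (p_old i − p_new i)` over the path. -/
theorem stmt_16 {ι : Type*} (pold pnew : ι → ℝ)
    (hpos : ∀ i, 0 < pnew i) (hge : ∀ i, pnew i ≤ pold i)
    (hd : ι) (tl : List ι) :
    aeapDelay pold pnew hd tl ≤
      ((hd :: tl).map (fun i => 2 * pnew i)).sum +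
        Finset.univ.sup' ⟨⟨0, by simp⟩, Finset.mem_univ _⟩
          (fun k : Fin (hd :: tl).length =>
            pold ((hd :: tl).get k) - pnew ((hd :: tl).get k)) := by
  set M := Finset.univ.sup' ⟨⟨0, by simp⟩, Finset.mem_univ _⟩
          (fun k : Fin (hd :: tl).length =>
            pold ((hd :: tl).get k) - pnew ((hd :: tl).get k)) with hMdef
  have hmem : ∀ i ∈ (hd :: tl), pold i - pnew i ≤ M := by
    intro i hi
    obtain ⟨k, hk⟩ := List.mem_iff_get.mp hi
    have := Finset.le_sup' (f := fun k : Fin (hd :: tl).length =>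
        pold ((hd :: tl).get k) - pnew ((hd :: tl).get k)) (Finset.mem_univ k)
    rw [hk] at this
    exact this
  have key := aeap_fold_le pold pnew hpos M tl (pold hd + pnew hd)
    (fun i hi => hmem i (by simp [hi]))
  have hhd : pold hd - pnew hd ≤ M := hmem hd (by simp)
  have hmax : max (pold hd + pnew hd) M ≤ 2 * pnew hd + M := by
    have := hpos hd
    exact max_le (by linarith) (by linarith)
  unfold aeapDelay
  simp only [List.map_cons, List.sum_cons]
  calc tl.foldl (aeapStep pold pnew) (pold hd + pnew hd)
      ≤ max (pold hd + pnew hd) M + (tl.map (fun i => 2 * pnew i)).sum := key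
    _ ≤ (2 * pnew hd + M) + (tl.map (fun i => 2 * pnew i)).sum := by linarith
    _ = 2 * pnew hd + (tl.map (fun i => 2 * pnew i)).sum + M := by ring
end
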